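/- arXiv:1905.07309 — 2 statements merged into one kernel-verified Lean document; each statement's English description precedes it below -/
import Mathlib

section
/- Let X be a Hilbert space, and let F(t), t ≥ 0, be a family of bounded self-adjoint operators on X with F(0) = Id and such that for every φ in a dense subspace D the limit Lφ := lim_{t→0+}(F(t)φ − φ)/t exists. Then the family F*(t) := exp(i(F(t) − Id)) consists of unitary operators (so ‖F*(t)‖ = 1), F*(0) = Id, and lim_{t→0+}(F*(t)φ − φ)/t = iLφ for every φ ∈ D. -/
open Filter Topology Complex

/-! With `R = expIRemQuot`, `R z = (e^{iz} - 1 - iz) / z`, and `a t = F t - 1`, one has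
`t⁻¹ • (F* t φ - φ) = I • g t + R(a t) (g t)`, where `g t = t⁻¹ • a t φ → L φ`.
The operators `R(a t)` have norm at most `2`, since `|R| ≤ 2` on `ℝ`, and they tend strongly to `0`
on `D`: from `|R x|² ≤ 4 |x|` one gets `‖R(a) χ‖² ≤ 4 ‖a χ‖ ‖χ‖`, and `a t χ → 0` for `χ ∈ D`.
By density they tend strongly to `0` everywhere, hence `R(a t) (g t) → 0`.
The decomposition is `e^{ia} - 1 - ia = R(a) a` in the continuous functional calculus. -/

section Density

variable {ι 𝕜 E F : Type*} [NontriviallyNormedField 𝕜] [NormedAddCommGroup E] [NormedSpace 𝕜 E]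
  [NormedAddCommGroup F] [NormedSpace 𝕜 F] {l : Filter ι} {T : ι → E →L[𝕜] F} {C : ℝ}

theorem tendsto_apply_zero_of_dense (hT : ∀ᶠ i in l, ‖T i‖ ≤ C) {S : Set E} (hS : Dense S)
    (hTS : ∀ χ ∈ S, Tendsto (fun i => T i χ) l (𝓝 0)) (v : E) :
    Tendsto (fun i => T i v) l (𝓝 0) := by
  rw [Metric.tendsto_nhds]
  intro ε hε
  obtain ⟨χ, hχ, hvχ⟩ := hS.exists_dist_lt v (by positivity : 0 < ε / (2 * max C 1))
  filter_upwards [hT, Metric.tendsto_nhds.1 (hTS χ hχ) (ε / 2) (by positivity)] with i hTi hχi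
  rw [dist_zero_right] at hχi ⊢
  calc ‖T i v‖ = ‖T i (v - χ) + T i χ‖ := by rw [map_sub, sub_add_cancel]
    _ ≤ max C 1 * dist v χ + ‖T i χ‖ := by
      rw [dist_eq_norm]
      exact norm_add_le_of_le ((T i).le_of_opNorm_le (hTi.trans (le_max_left _ _)) _) le_rfl
    _ < max C 1 * (ε / (2 * max C 1)) + ε / 2 := by gcongr
    _ = ε := by field_simp; ring

theorem Filter.Tendsto.apply_tendsto_zero_of_dense {g : ι → E} {v : E}
    (hg : Tendsto g l (𝓝 v)) (hT : ∀ᶠ i in l, ‖T i‖ ≤ C) {S : Set E} (hS : Dense S)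
    (hTS : ∀ χ ∈ S, Tendsto (fun i => T i χ) l (𝓝 0)) :
    Tendsto (fun i => T i (g i)) l (𝓝 0) := by
  have hgv : Tendsto (fun i => T i (g i - v)) l (𝓝 0) := by
    refine squeeze_zero_norm' (hT.mono fun i hi => (T i).le_of_opNorm_le hi _) ?_
    simpa using (tendsto_iff_norm_sub_tendsto_zero.1 hg).const_mul C
  simpa using hgv.add (tendsto_apply_zero_of_dense hT hS hTS v)

end Density

theorem continuous_div_id_of_norm_le_sq {𝕜 : Type*} [NormedField 𝕜] {f : 𝕜 → 𝕜}
    (hf : Continuous f) (hf0 : ∀ᶠ z in 𝓝 0, ‖f z‖ ≤ ‖z‖ ^ 2) : Continuous fun z => f z / z := by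
  refine continuous_iff_continuousAt.2 fun z => ?_
  rcases eq_or_ne z 0 with rfl | hz
  · rw [ContinuousAt, div_zero]
    refine squeeze_zero_norm' ?_ tendsto_norm_zero
    filter_upwards [hf0] with w hw
    rw [norm_div]
    exact div_le_of_le_mul₀ (norm_nonneg _) (norm_nonneg _) (by rwa [← sq])
  · exact hf.continuousAt.div continuousAt_id hz

/-- The junk value `z / 0 = 0` is also the limit at `0`, so this function is continuous. -/
noncomputable def expIRemQuot (z : ℂ) : ℂ := (cexp (I * z) - 1 - I * z) / z

theorem norm_expIRemQuot_le {z : ℂ} (hz : ‖z‖ ≤ 1) : ‖expIRemQuot z‖ ≤ ‖z‖ := by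
  have h := norm_exp_sub_one_sub_id_le (x := I * z) (by simpa using hz)
  rw [expIRemQuot, norm_div]
  exact div_le_of_le_mul₀ (norm_nonneg _) (norm_nonneg _) (by simpa [sq] using h)

theorem norm_expIRemQuot_ofReal_le_two (x : ℝ) : ‖expIRemQuot x‖ ≤ 2 := by
  have h : ‖cexp (I * x) - 1 - I * x‖ ≤ 2 * ‖(x : ℂ)‖ :=
    calc ‖cexp (I * x) - 1 - I * x‖ ≤ ‖cexp (I * x) - 1‖ + ‖I * x‖ := norm_sub_le _ _
      _ ≤ 2 * ‖(x : ℂ)‖ := by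
        rw [norm_mul, norm_I, one_mul, two_mul, Complex.norm_real]
        gcongr
        exact Real.norm_exp_I_mul_ofReal_sub_one_le
  rw [expIRemQuot, norm_div]
  exact div_le_of_le_mul₀ (norm_nonneg _) zero_le_two h

theorem norm_expIRemQuot_ofReal_sq_le (x : ℝ) : ‖expIRemQuot x‖ ^ 2 ≤ 4 * ‖(x : ℂ)‖ := by
  have h2 := norm_expIRemQuot_ofReal_le_two x
  rcases le_total ‖(x : ℂ)‖ 1 with hx | hx
  · nlinarith [norm_expIRemQuot_le hx, norm_nonneg (expIRemQuot x)]
  · nlinarith [norm_nonneg (expIRemQuot x)]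

@[fun_prop]
theorem continuous_expIRemQuot : Continuous expIRemQuot := by
  refine continuous_div_id_of_norm_le_sq (by fun_prop) ?_
  filter_upwards [Metric.closedBall_mem_nhds (0 : ℂ) one_pos] with z hz
  exact norm_exp_sub_one_sub_id_le (x := I * z) (by simpa using hz) |>.trans_eq (by simp)

theorem continuous_star_expIRemQuot_mul_div :
    Continuous fun z => star (expIRemQuot z) * expIRemQuot z / z := by
  refine continuous_div_id_of_norm_le_sq (by fun_prop) ?_
  filter_upwards [Metric.closedBall_mem_nhds (0 : ℂ) one_pos] with z hz
  rw [norm_mul, norm_star, ← sq]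
  gcongr
  exact norm_expIRemQuot_le (by simpa using hz)

section CStarAlgebra

variable {A : Type*} [CStarAlgebra A] {a : A}

theorem cfc_div_id_mul_self [IsStarNormal a] {f : ℂ → ℂ} (hf : Continuous fun z => f z / z)
    (hf0 : f 0 = 0) : cfc (fun z => f z / z) a * a = cfc f a := by
  calc cfc (fun z => f z / z) a * a = cfc (fun z => f z / z) a * cfc (fun z => z) a := by
        rw [cfc_id' ℂ a]
    _ = cfc (fun z => f z / z * z) a := (cfc_mul _ _ a hf.continuousOn).symm
    _ = cfc f a := cfc_congr fun z _ => by
        rcases eq_or_ne z 0 with rfl | hz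
        · simp [hf0]
        · exact div_mul_cancel₀ _ hz

theorem IsSelfAdjoint.exp_I_smul_eq_cfc (ha : IsSelfAdjoint a) :
    NormedSpace.exp (I • a) = cfc (fun z => cexp (I * z)) a := by
  have : IsStarNormal a := ha.isStarNormal
  rw [cfc_comp_const_mul I cexp a, CFC.complex_exp_eq_normedSpace_exp]

theorem IsSelfAdjoint.exp_I_smul_sub_one_sub (ha : IsSelfAdjoint a) :
    NormedSpace.exp (I • a) - 1 - I • a = cfc expIRemQuot a * a := by
  have : IsStarNormal a := ha.isStarNormal
  unfold expIRemQuot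
  rw [cfc_div_id_mul_self continuous_expIRemQuot (by simp), cfc_sub _ _ a,
    cfc_sub _ _ a, cfc_const_one ℂ a, cfc_const_mul_id I a, ha.exp_I_smul_eq_cfc]

theorem IsSelfAdjoint.norm_cfc_expIRemQuot_le (ha : IsSelfAdjoint a) : ‖cfc expIRemQuot a‖ ≤ 2 :=
  norm_cfc_le zero_le_two fun _ hz => ha.mem_spectrum_eq_re hz ▸ norm_expIRemQuot_ofReal_le_two _

theorem IsSelfAdjoint.star_cfc_expIRemQuot_mul_self (ha : IsSelfAdjoint a) :
    star (cfc expIRemQuot a) * cfc expIRemQuot a =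
      cfc (fun z => star (expIRemQuot z) * expIRemQuot z / z) a * a := by
  have : IsStarNormal a := ha.isStarNormal
  rw [cfc_div_id_mul_self continuous_star_expIRemQuot_mul_div (by simp [expIRemQuot]),
    ← cfc_star, cfc_mul _ _ a]

end CStarAlgebra

theorem IsSelfAdjoint.norm_cfc_expIRemQuot_apply_le {X : Type*} [NormedAddCommGroup X]
    [InnerProductSpace ℂ X] [CompleteSpace X] {a : X →L[ℂ] X} (ha : IsSelfAdjoint a) (v : X) :
    ‖cfc expIRemQuot a v‖ ≤ √(4 * ‖a v‖ * ‖v‖) := by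
  set k := fun z => star (expIRemQuot z) * expIRemQuot z / z
  have hk : ‖cfc k a‖ ≤ 4 := norm_cfc_le zero_le_four fun z hz => by
    rw [ha.mem_spectrum_eq_re hz, norm_div, norm_mul, norm_star, ← sq]
    exact div_le_of_le_mul₀ (norm_nonneg _) zero_le_four (norm_expIRemQuot_ofReal_sq_le _)
  refine Real.le_sqrt_of_sq_le ?_
  calc ‖cfc expIRemQuot a v‖ ^ 2 = RCLike.re (inner ℂ (cfc k a (a v)) v) := by
        rw [ContinuousLinearMap.apply_norm_sq_eq_inner_adjoint_left,
          ← ContinuousLinearMap.star_eq_adjoint, ← ContinuousLinearMap.mul_def,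
          ha.star_cfc_expIRemQuot_mul_self]
        rfl
    _ ≤ ‖cfc k a (a v)‖ * ‖v‖ := re_inner_le_norm _ _
    _ ≤ 4 * ‖a v‖ * ‖v‖ := by
        gcongr
        exact (cfc k a).le_of_opNorm_le hk _

theorem IsSelfAdjoint.exp_I_smul_apply_sub_self {X : Type*} [NormedAddCommGroup X]
    [InnerProductSpace ℂ X] [CompleteSpace X] {a : X →L[ℂ] X} (ha : IsSelfAdjoint a) (v : X) :
    NormedSpace.exp (I • a) v - v = I • a v + cfc expIRemQuot a (a v) := by
  have h := congrArg (· v) ha.exp_I_smul_sub_one_sub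
  simp only [sub_apply, one_apply_eq_self, smul_apply, mul_apply_eq_comp] at h
  rw [← h]
  abel

theorem tendsto_zero_of_tendsto_inv_smul {E : Type*} [NormedAddCommGroup E] [NormedSpace ℂ E]
    {u : ℝ → E} {w : E} (hu : Tendsto (fun t : ℝ => (t : ℂ)⁻¹ • u t) (𝓝[>] 0) (𝓝 w)) :
    Tendsto u (𝓝[>] 0) (𝓝 0) := by
  have hcoe : Tendsto (fun t : ℝ => (t : ℂ)) (𝓝[>] 0) (𝓝 0) :=
    (Complex.continuous_ofReal.tendsto' 0 0 ofReal_zero).mono_left nhdsWithin_le_nhds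
  refine (zero_smul ℂ w ▸ hcoe.smul hu).congr' ?_
  filter_upwards [self_mem_nhdsWithin] with t (ht : 0 < t)
  exact smul_inv_smul₀ (ofReal_ne_zero.2 ht.ne') _

/-- The "rotation" construction: if `(F t)` is a Chernoff family of bounded self-adjoint
operators with derivative `L` at zero on a dense subspace `D`, then
`F*(t) = exp(i(F t - Id))` is a family of unitary operators with `F*(0) = Id` and
derivative `iL` at zero on `D`. -/
theorem chernoff_rotation_to_schroedinger_group
    {X : Type*} [NormedAddCommGroup X] [InnerProductSpace ℂ X] [CompleteSpace X] [Nontrivial X]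
    (F : ℝ → X →L[ℂ] X) (hFsa : ∀ t ≥ (0 : ℝ), IsSelfAdjoint (F t)) (hF0 : F 0 = 1)
    (D : Submodule ℂ X) (hD : Dense (D : Set X)) (L : X → X)
    (hL : ∀ φ ∈ D, Tendsto (fun t : ℝ => (t : ℂ)⁻¹ • (F t φ - φ)) (𝓝[>] 0) (𝓝 (L φ)))
    (Fstar : ℝ → X →L[ℂ] X)
    (hFstar : ∀ t, Fstar t = NormedSpace.exp (Complex.I • (F t - 1))) :
    (∀ t ≥ (0 : ℝ), Fstar t ∈ unitary (X →L[ℂ] X)) ∧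
    (∀ t ≥ (0 : ℝ), ‖Fstar t‖ = 1) ∧
    Fstar 0 = 1 ∧
    (∀ φ ∈ D, Tendsto (fun t : ℝ => (t : ℂ)⁻¹ • (Fstar t φ - φ)) (𝓝[>] 0)
      (𝓝 (Complex.I • L φ))) := by
  have hUnit : ∀ t ≥ (0 : ℝ), Fstar t ∈ unitary (X →L[ℂ] X) := fun t ht =>
    hFstar t ▸ (selfAdjoint.expUnitary ⟨F t - 1, (hFsa t ht).sub (.one _)⟩).prop
  refine ⟨hUnit, fun t ht => CStarRing.norm_of_mem_unitary (hUnit t ht), ?_, fun φ hφ => ?_⟩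
  · rw [hFstar, hF0, sub_self, smul_zero, NormedSpace.exp_zero]
  have hsa : ∀ᶠ t in 𝓝[>] (0 : ℝ), IsSelfAdjoint (F t - 1) :=
    eventually_nhdsWithin_of_forall fun t ht => (hFsa t (le_of_lt ht)).sub (.one _)
  have hdense : ∀ χ ∈ D, Tendsto (fun t => cfc expIRemQuot (F t - 1) χ) (𝓝[>] 0) (𝓝 0) := by
    intro χ hχ
    have hχ0 := tendsto_zero_of_tendsto_inv_smul (hL χ hχ)
    refine squeeze_zero_norm' (hsa.mono fun t h => h.norm_cfc_expIRemQuot_apply_le χ) ?_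
    simpa using ((hχ0.norm.const_mul 4).mul_const ‖χ‖).sqrt
  have hrem := (hL φ hφ).apply_tendsto_zero_of_dense
    (hsa.mono fun t h => h.norm_cfc_expIRemQuot_le) hD hdense
  refine add_zero (I • L φ) ▸ (((hL φ hφ).const_smul I).add hrem).congr' ?_
  filter_upwards [hsa] with t ha
  rw [hFstar, ha.exp_I_smul_apply_sub_self, smul_add, smul_comm _ I,
    ← map_smul (cfc expIRemQuot (F t - 1))]
  simp only [sub_apply, one_apply_eq_self]
end

section
/- Let μ be a symmetric Borel probability measure on ℝ with finite third absolute moment and positive second moment a := ∫ ε² dμ(ε) > 0. Define U_μ(t)φ(x) := ∫_ℝ φ(x + ε√t) dμ(ε) on X = C_∞(ℝ). Then each U_μ(t) is a linear contraction on X, U_μ(0) = Id, and for every Schwartz function φ, (U_μ(t)φ − φ)/t converges uniformly to (a/2)φ'' as t → 0+. -/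
/-!
Expanding `φ (x + ε √t)` to second order around `x` and integrating against `μ`, the constant
term returns `φ x`, the linear term vanishes because `μ` is symmetric, and the quadratic term
gives `(a t / 2) φ'' x`. The Taylor remainder is at most `M |ε|³ t^(3/2)` with `M` a bound for
`φ'''` (three applications of the mean value inequality), so after division by `t` the error is
uniformly `O(√t)` by the finiteness of the third moment.
-/

open Filter Topology ZeroAtInfty MeasureTheory

theorem ZeroAtInftyContinuousMap.norm_le_iff {α β : Type*} [TopologicalSpace α]
    [NormedAddCommGroup β] {f : C₀(α, β)} {C : ℝ} (hC : 0 ≤ C) :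
    ‖f‖ ≤ C ↔ ∀ x, ‖f x‖ ≤ C := by
  rw [← norm_toBCF_eq_norm]
  exact BoundedContinuousFunction.norm_le hC

theorem ZeroAtInftyContinuousMap.norm_coe_le_norm {α β : Type*} [TopologicalSpace α]
    [NormedAddCommGroup β] (f : C₀(α, β)) (x : α) : ‖f x‖ ≤ ‖f‖ := by
  rw [← norm_toBCF_eq_norm]
  exact f.toBCF.norm_coe_le_norm x

theorem integral_id_eq_zero_of_map_neg_eq {E : Type*} [NormedAddCommGroup E] [NormedSpace ℝ E]
    [MeasurableSpace E] [MeasurableNeg E] {μ : Measure E} (hμ : μ.map (fun x => -x) = μ) :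
    ∫ x, x ∂μ = 0 := by
  have : μ.IsNegInvariant := ⟨hμ⟩
  have h := integral_neg_eq_self (fun x : E => x) μ
  rw [integral_neg, neg_eq_iff_add_eq_zero, ← two_smul ℝ] at h
  exact (smul_eq_zero.1 h).resolve_left two_ne_zero

theorem integrable_pow_of_integrable_abs_pow {μ : Measure ℝ} [IsFiniteMeasure μ] {k n : ℕ}
    (hkn : k ≤ n) (h : Integrable (fun x => |x| ^ n) μ) : Integrable (fun x => x ^ k) μ := by
  have := integrable_norm_pow_of_le (μ := μ) (f := (id : ℝ → ℝ)) aestronglyMeasurable_id hkn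
    (by simpa using h)
  exact (integrable_norm_iff (by fun_prop)).1 (by simpa using this)

theorem abs_le_mul_abs_pow_succ_of_abs_deriv_le {g g' : ℝ → ℝ} {C : ℝ} {n : ℕ} (hg0 : g 0 = 0)
    (hg : ∀ s, HasDerivAt g (g' s) s) (hg' : ∀ s, |g' s| ≤ C * |s| ^ n) (h : ℝ) :
    |g h| ≤ C * |h| ^ (n + 1) := by
  have hC : 0 ≤ C := by simpa using (abs_nonneg _).trans (hg' 1)
  have hbound : ∀ s ∈ Set.uIcc 0 h, ‖g' s‖ ≤ C * |h| ^ n := fun s hs => by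
    have : |s| ≤ |h| := by simpa using Set.abs_sub_left_of_mem_uIcc hs
    exact (hg' s).trans (by gcongr)
  have := (convex_uIcc 0 h).norm_image_sub_le_of_norm_hasDerivWithin_le
    (fun s _ => (hg s).hasDerivWithinAt) hbound Set.left_mem_uIcc Set.right_mem_uIcc
  simpa [hg0, pow_succ, mul_assoc] using this

theorem abs_taylor_remainder_two_le {f : ℝ → ℝ} (hf : ContDiff ℝ 3 f) {M : ℝ}
    (hM : ∀ y, |deriv (deriv (deriv f)) y| ≤ M) (x h : ℝ) :
    |f (x + h) - f x - deriv f x * h - deriv (deriv f) x * h ^ 2 / 2| ≤ M * |h| ^ 3 := by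
  obtain ⟨hf₀, -, hf⟩ := (contDiff_succ_iff_deriv (n := 2)).1 hf
  obtain ⟨hf₁, -, hf⟩ := (contDiff_succ_iff_deriv (n := 1)).1 hf
  have hf₂ := ((contDiff_succ_iff_deriv (n := 0)).1 hf).1
  set f₁ := deriv f
  set f₂ := deriv f₁
  have hR₀ : ∀ h, |f₂ (x + h) - f₂ x| ≤ M * |h| ^ 1 :=
    abs_le_mul_abs_pow_succ_of_abs_deriv_le (n := 0) (by simp)
      (fun s => ((hf₂ (x + s)).hasDerivAt.comp_const_add x s).sub_const _)
      (fun s => by simpa using hM (x + s))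
  have hR₁ : ∀ h, |f₁ (x + h) - f₁ x - f₂ x * h| ≤ M * |h| ^ 2 :=
    abs_le_mul_abs_pow_succ_of_abs_deriv_le (by simp)
      (fun s => (((hf₁ (x + s)).hasDerivAt.comp_const_add x s).sub_const _).sub
        (hasDerivAt_const_mul (f₂ x)))
      hR₀
  refine abs_le_mul_abs_pow_succ_of_abs_deriv_le
    (g := fun h => f (x + h) - f x - f₁ x * h - f₂ x * h ^ 2 / 2) (by simp) (fun s => ?_) hR₁ h
  exact ((((hf₀ (x + s)).hasDerivAt.comp_const_add x s).sub_const (f x)).sub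
    (hasDerivAt_const_mul (f₁ x))).sub
    (((hasDerivAt_pow 2 s).const_mul (f₂ x)).div_const 2) |>.congr_deriv (by norm_num; ring)

theorem abs_integral_comp_add_mul_sub_le {μ : Measure ℝ} [IsProbabilityMeasure μ]
    (hmean : ∫ ε, ε ∂μ = 0) (hmom3 : Integrable (fun ε => |ε| ^ 3) μ) {f : ℝ → ℝ}
    (hf : ContDiff ℝ 3 f) {M : ℝ} (hM : ∀ y, |deriv (deriv (deriv f)) y| ≤ M) (x s : ℝ) :
    |∫ ε, f (x + ε * s) ∂μ - f x - (∫ ε, ε ^ 2 ∂μ) * s ^ 2 / 2 * deriv (deriv f) x|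
      ≤ M * (∫ ε, |ε| ^ 3 ∂μ) * |s| ^ 3 := by
  set R : ℝ → ℝ := fun ε =>
    f (x + ε * s) - f x - deriv f x * (ε * s) - deriv (deriv f) x * (ε * s) ^ 2 / 2
  have hR : ∀ ε, ‖R ε‖ ≤ M * |s| ^ 3 * |ε| ^ 3 := fun ε => by
    rw [Real.norm_eq_abs]
    convert abs_taylor_remainder_two_le hf hM x (ε * s) using 1
    rw [abs_mul]; ring
  have hRint : Integrable R μ :=
    (hmom3.const_mul _).mono' (by fun_prop) (ae_of_all _ hR)
  have hexpand : (fun ε => f (x + ε * s)) = fun ε =>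
      f x + deriv f x * s * ε + deriv (deriv f) x * s ^ 2 / 2 * ε ^ 2 + R ε := by
    funext ε; simp only [R]; ring
  have hint₁ := integrable_pow_of_integrable_abs_pow (k := 1) (by norm_num) hmom3
  have hint₂ := integrable_pow_of_integrable_abs_pow (k := 2) (by norm_num) hmom3
  simp only [pow_one] at hint₁
  have h₀ : Integrable (fun _ => f x) μ := integrable_const _
  have h₁ := hint₁.const_mul (deriv f x * s)
  have h₂ := hint₂.const_mul (deriv (deriv f) x * s ^ 2 / 2)
  have h₀₁ : Integrable (fun ε => f x + deriv f x * s * ε) μ := h₀.add h₁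
  have h₀₁₂ : Integrable (fun ε =>
      f x + deriv f x * s * ε + deriv (deriv f) x * s ^ 2 / 2 * ε ^ 2) μ := h₀₁.add h₂
  rw [hexpand, integral_add h₀₁₂ hRint, integral_add h₀₁ h₂, integral_add h₀ h₁, integral_const,
    integral_const_mul, integral_const_mul, hmean, probReal_univ, one_smul, mul_zero, add_zero]
  convert norm_integral_le_of_norm_le (hmom3.const_mul (M * |s| ^ 3)) (ae_of_all _ hR) using 1
  · rw [Real.norm_eq_abs]; ring_nf
  · rw [integral_const_mul]; ring

theorem abs_inv_mul_integral_comp_add_mul_sqrt_sub_le {μ : Measure ℝ} [IsProbabilityMeasure μ]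
    (hmean : ∫ ε, ε ∂μ = 0) (hmom3 : Integrable (fun ε => |ε| ^ 3) μ) {f : ℝ → ℝ}
    (hf : ContDiff ℝ 3 f) {M : ℝ} (hM : ∀ y, |deriv (deriv (deriv f)) y| ≤ M) {t : ℝ}
    (ht : 0 < t) (x : ℝ) :
    |t⁻¹ * (∫ ε, f (x + ε * Real.sqrt t) ∂μ - f x) - (∫ ε, ε ^ 2 ∂μ) / 2 * deriv (deriv f) x|
      ≤ M * (∫ ε, |ε| ^ 3 ∂μ) * Real.sqrt t := by
  have hsq : Real.sqrt t ^ 2 = t := Real.sq_sqrt ht.le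
  have key := abs_integral_comp_add_mul_sub_le hmean hmom3 hf hM x (Real.sqrt t)
  rw [abs_of_nonneg (Real.sqrt_nonneg t), hsq, pow_succ, hsq] at key
  generalize ∫ ε, f (x + ε * Real.sqrt t) ∂μ = I at key ⊢
  calc _ = |t⁻¹ * (I - f x - (∫ ε, ε ^ 2 ∂μ) * t / 2 * deriv (deriv f) x)| := by
        congr 1; field_simp
    _ ≤ t⁻¹ * (M * (∫ ε, |ε| ^ 3 ∂μ) * (t * Real.sqrt t)) := by
        rw [abs_mul, abs_of_pos (inv_pos.2 ht)]; gcongr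
    _ = _ := by field_simp

theorem chernoff_averaged_shift_family_general
    (μ : Measure ℝ) [IsProbabilityMeasure μ]
    (hsymm : μ.map (fun ε : ℝ => -ε) = μ)
    (hmom3 : Integrable (fun ε : ℝ => |ε| ^ 3) μ)
    (a : ℝ) (ha_def : a = ∫ ε, ε ^ 2 ∂μ)
    (U : ℝ → C₀(ℝ, ℝ) →L[ℝ] C₀(ℝ, ℝ))
    (hU : ∀ t ≥ (0 : ℝ), ∀ φ : C₀(ℝ, ℝ), ∀ x : ℝ,
      U t φ x = ∫ ε, φ (x + ε * Real.sqrt t) ∂μ) :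
    (∀ t ≥ (0 : ℝ), ‖U t‖ ≤ 1) ∧
    U 0 = 1 ∧
    (∀ (φ : SchwartzMap ℝ ℝ) (ψ g : C₀(ℝ, ℝ)),
      (∀ x, ψ x = φ x) → (∀ x, g x = (a / 2) * deriv (deriv ⇑φ) x) →
      Tendsto (fun t : ℝ => ‖t⁻¹ • (U t ψ - ψ) - g‖) (𝓝[>] 0) (𝓝 0)) := by
  subst ha_def
  refine ⟨fun t ht => ?_, ?_, fun φ ψ g hψ hg => ?_⟩
  · refine (U t).opNorm_le_bound zero_le_one fun φ => ?_
    rw [one_mul, ZeroAtInftyContinuousMap.norm_le_iff (norm_nonneg φ)]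
    intro x
    rw [hU t ht]
    simpa using norm_integral_le_of_norm_le_const (μ := μ)
      (ae_of_all _ fun ε => φ.norm_coe_le_norm (x + ε * Real.sqrt t))
  · ext φ x
    simp [hU 0 le_rfl]
  set C := SchwartzMap.seminorm ℝ 0 3 φ * ∫ ε, |ε| ^ 3 ∂μ
  have hM : ∀ y, |deriv (deriv (deriv φ)) y| ≤ SchwartzMap.seminorm ℝ 0 3 φ := fun y => by
    simpa [iteratedDeriv_eq_iterate] using φ.le_seminorm' ℝ 0 3 y
  have hbound : ∀ t > 0, ‖t⁻¹ • (U t ψ - ψ) - g‖ ≤ C * Real.sqrt t := fun t ht => by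
    rw [ZeroAtInftyContinuousMap.norm_le_iff (by positivity)]
    intro x
    simpa [hU t ht.le, hψ, hg] using abs_inv_mul_integral_comp_add_mul_sqrt_sub_le
      (integral_id_eq_zero_of_map_neg_eq hsymm) hmom3 (φ.smooth 3) hM ht x
  have hlim : Tendsto (fun t => C * Real.sqrt t) (𝓝[>] 0) (𝓝 0) := by
    simpa using ((Real.continuous_sqrt.tendsto 0).const_mul C).mono_left nhdsWithin_le_nhds
  exact squeeze_zero' (Eventually.of_forall fun t => norm_nonneg _)
    (eventually_nhdsWithin_of_forall hbound) hlim

/-- The averaged-shift family `U_μ(t)φ(x) = ∫ φ(x+ε√t) dμ(ε)` associated with a symmetric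
probability measure `μ` with finite third absolute moment and positive second moment `a`
is a family of contractions on `C_∞(ℝ)`, `U_μ(0) = Id`, and on Schwartz functions its
derivative at `t = 0` is `(a/2)φ''`, uniformly on `ℝ`. -/
theorem chernoff_averaged_shift_family
    (μ : Measure ℝ) [IsProbabilityMeasure μ]
    (hsymm : μ.map (fun ε : ℝ => -ε) = μ)
    (hmom3 : Integrable (fun ε : ℝ => |ε| ^ 3) μ)
    (a : ℝ) (ha_def : a = ∫ ε, ε ^ 2 ∂μ) (ha_pos : 0 < a)
    (U : ℝ → C₀(ℝ, ℝ) →L[ℝ] C₀(ℝ, ℝ))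
    (hU : ∀ t ≥ (0 : ℝ), ∀ φ : C₀(ℝ, ℝ), ∀ x : ℝ,
      U t φ x = ∫ ε, φ (x + ε * Real.sqrt t) ∂μ) :
    (∀ t ≥ (0 : ℝ), ‖U t‖ ≤ 1) ∧
    U 0 = 1 ∧
    (∀ (φ : SchwartzMap ℝ ℝ) (ψ g : C₀(ℝ, ℝ)),
      (∀ x, ψ x = φ x) → (∀ x, g x = (a / 2) * deriv (deriv ⇑φ) x) →
      Tendsto (fun t : ℝ => ‖t⁻¹ • (U t ψ - ψ) - g‖) (𝓝[>] 0) (𝓝 0)) :=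
  chernoff_averaged_shift_family_general μ hsymm hmom3 a ha_def U hU
end
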